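/- Let (K, v) be a henselian valued field, let n ∈ ℕ with n ≥ 2, and let ε ∈ K× be such that v(ε) is not n-divisible in the value group vK. Then {x ∈ K : v(ε·x^n) > 0} = {x ∈ K : there exists y ∈ K with y^n − y^(n−1) = ε·x^n}. -/

import Mathlib

open Polynomial

section ValuationPrelude

variable {K : Type*} [Field K] {G : Type*} [AddCommGroup G] [LinearOrder G] [IsOrderedAddMonoid G]

/-- `v : K → G ∪ {∞}` is a (surjective) valuation on the field `K` with value group `G`. -/
def IsValuation (v : K → WithTop G) : Prop :=
  (∀ x, v x = ⊤ ↔ x = 0) ∧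
  (∀ x y, v (x * y) = v x + v y) ∧
  (∀ x y, min (v x) (v y) ≤ v (x + y)) ∧
  (∀ g : G, ∃ x, v x = (g : WithTop G))

/-- Hensel's Lemma holds for `(K, v)` for all polynomials of degree at most `n`. -/
def DegLEHenselian (v : K → WithTop G) (n : ℕ) : Prop :=
  ∀ f : Polynomial K, f.natDegree ≤ n → (∀ i, (0 : WithTop G) ≤ v (f.coeff i)) →
    ∀ a : K, (0 : WithTop G) ≤ v a →
      (0 : WithTop G) < v (f.eval a) →
      ¬ (0 : WithTop G) < v (f.derivative.eval a) →
      ∃ b : K, (0 : WithTop G) ≤ v b ∧ f.eval b = 0 ∧ (0 : WithTop G) < v (b - a)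

/-- `(K, v)` is henselian: Hensel's Lemma holds for all polynomials. -/
def IsHenselianValuation (v : K → WithTop G) : Prop :=
  ∀ n : ℕ, DegLEHenselian v n

end ValuationPrelude

/-! Hensel's lemma at the simple root `1` of `X ^ n - X ^ (n - 1)` (the derivative there is
`n - (n - 1) = 1`) solves `y ^ n - y ^ (n - 1) = c` whenever `v c > 0`. Conversely, if such a `y`
exists and `v c ≤ 0`, then `c = y ^ (n - 1) * (y - 1)` forces `v y ≤ 0`, and then `v c = n • v y`
(if `v y < 0`) or `v c = 0` (if `v y = 0`). So `v c = v ε + n • v x` is `n`-divisible, and hence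
so is `v ε`. -/

section

variable {K : Type*} [Field K] {G : Type*} [AddCommGroup G] [LinearOrder G] [IsOrderedAddMonoid G]

namespace IsValuation

variable {v : K → WithTop G}

theorem map_one (hv : IsValuation v) : v 1 = 0 := by
  obtain ⟨g, hg⟩ := WithTop.ne_top_iff_exists.mp (mt (hv.1 1).mp one_ne_zero)
  have h := hv.2.1 1 1
  rw [mul_one] at h
  rw [← hg] at h ⊢
  norm_cast at h ⊢
  exact left_eq_add.mp h

def toAddValuation (hv : IsValuation v) : AddValuation K (WithTop G) :=
  AddValuation.of v ((hv.1 0).mpr rfl) hv.map_one hv.2.2.1 hv.2.1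

end IsValuation

namespace AddValuation

variable (v : AddValuation K (WithTop G))

theorem exists_coe_eq {x : K} (hx : x ≠ 0) : ∃ g : G, (g : WithTop G) = v x :=
  WithTop.ne_top_iff_exists.mp ((v.ne_top_iff).mpr hx)

theorem exists_pow_sub_pow_pred_eq_of_pos {n : ℕ} (hv : DegLEHenselian v n) (hn : n ≠ 0) {c : K}
    (hc : 0 < v c) : ∃ y : K, y ^ n - y ^ (n - 1) = c := by
  obtain ⟨m, rfl⟩ := Nat.exists_eq_succ_of_ne_zero hn
  have hpow : ∀ k i, 0 ≤ v ((X ^ k : K[X]).coeff i) := by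
    intro k i
    rw [coeff_X_pow]
    split_ifs <;> simp
  have hconst : ∀ i, 0 ≤ v ((C c).coeff i) := by
    intro i
    rw [coeff_C]
    split_ifs
    exacts [hc.le, by simp]
  set f : K[X] := X ^ (m + 1) - X ^ m - C c with hf
  have hdeg : f.natDegree ≤ m + 1 := by
    rw [hf]
    compute_degree
  have hcoeff : ∀ i, 0 ≤ v (f.coeff i) := by
    intro i
    simp only [hf, coeff_sub]
    exact v.map_le_sub (v.map_le_sub (hpow _ i) (hpow _ i)) (hconst i)
  have hderiv : f.derivative.eval 1 = 1 := by
    simp [hf, derivative_X_pow]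
  obtain ⟨y, -, hy, -⟩ := hv f hdeg hcoeff 1 (by simp) (by simpa [hf] using hc)
    (by rw [hderiv, v.map_one]; exact lt_irrefl 0)
  exact ⟨y, by simpa [hf, sub_eq_zero] using hy⟩

theorem exists_nsmul_eq_of_pow_sub_pow_pred_eq {n : ℕ} (hn : 2 ≤ n) {y c : K}
    (hy : y ^ n - y ^ (n - 1) = c) (hc : v c ≤ 0) : ∃ g : G, v c = ↑(n • g) := by
  obtain ⟨m, rfl⟩ := Nat.exists_eq_add_of_le' hn
  rw [show m + 2 - 1 = m + 1 from rfl] at hy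
  have hc0 : c ≠ 0 := by
    rintro rfl
    simp at hc
  have hy0 : y ≠ 0 := by
    rintro rfl
    simp [← hy] at hc0
  obtain ⟨g, hg⟩ := v.exists_coe_eq hy0
  have hfac : v c = (m + 1) • v y + v (y - 1) := by
    rw [← hy, ← v.map_pow, ← v.map_mul]
    congr 1
    ring
  rcases lt_trichotomy g 0 with hneg | rfl | hpos
  · have hsub : v (y - 1) = v y := v.map_sub_eq_of_lt_left (by simpa [← hg] using hneg)
    refine ⟨g, ?_⟩
    rw [hfac, hsub, ← succ_nsmul, ← hg, WithTop.coe_nsmul]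
  · have hsub : 0 ≤ v (y - 1) := v.map_le_sub (by simp [← hg]) v.map_one.ge
    refine ⟨0, le_antisymm (by simpa using hc) ?_⟩
    simpa [hfac, ← hg] using hsub
  · have hsub : v (y - 1) = 0 := by
      rw [v.map_sub_eq_of_lt_right (by simpa [← hg] using hpos), v.map_one]
    rw [hfac, hsub, add_zero, ← hg, ← WithTop.coe_nsmul] at hc
    exact ((nsmul_pos hpos m.succ_ne_zero).not_ge (WithTop.coe_le_zero.mp hc)).elim

theorem exists_nsmul_eq_of_mul_pow {n : ℕ} {ε x : K} (hx : x ≠ 0) {g : G}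
    (h : v (ε * x ^ n) = ↑(n • g)) : ∃ h : G, v ε = ↑(n • h) := by
  obtain ⟨gx, hgx⟩ := v.exists_coe_eq hx
  refine ⟨g - gx, ?_⟩
  have hε : v ε = v (ε * x ^ n) + n • v x⁻¹ := by
    rw [← v.map_pow, ← v.map_mul, inv_pow, mul_assoc, mul_inv_cancel₀ (pow_ne_zero _ hx), mul_one]
  rw [hε, h, v.map_inv, ← hgx, ← WithTop.LinearOrderedAddCommGroup.coe_neg, ← WithTop.coe_nsmul,
    ← WithTop.coe_add, nsmul_sub, sub_eq_add_neg, smul_neg]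

end AddValuation

end

theorem stmt1_general {K : Type*} [Field K] {G : Type*} [AddCommGroup G] [LinearOrder G] [IsOrderedAddMonoid G]
    (v : K → WithTop G) (hval : IsValuation v) (hhens : IsHenselianValuation v)
    (n : ℕ) (hn : 2 ≤ n) (ε : K)
    (hnd : ¬ ∃ h : G, v ε = ((n • h : G) : WithTop G)) :
    {x : K | (0 : WithTop G) < v (ε * x ^ n)} =
      {x : K | ∃ y : K, y ^ n - y ^ (n - 1) = ε * x ^ n} := by
  let w := hval.toAddValuation
  ext x
  simp only [Set.mem_ofPred_eq]
  refine ⟨fun hx => w.exists_pow_sub_pow_pred_eq_of_pos (hhens n) (by omega) hx, ?_⟩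
  rintro ⟨y, hy⟩
  by_contra! hle
  obtain ⟨g, hg⟩ := w.exists_nsmul_eq_of_pow_sub_pow_pred_eq hn hy hle
  have hx : x ≠ 0 := by
    rintro rfl
    simp [zero_pow (by omega : n ≠ 0), (hval.1 0).mpr rfl] at hle
  exact hnd (w.exists_nsmul_eq_of_mul_pow hx hg)

theorem stmt1 {K : Type*} [Field K] {G : Type*} [AddCommGroup G] [LinearOrder G] [IsOrderedAddMonoid G]
    (v : K → WithTop G) (hval : IsValuation v) (hhens : IsHenselianValuation v)
    (n : ℕ) (hn : 2 ≤ n) (ε : K) (hε : ε ≠ 0)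
    (hnd : ¬ ∃ h : G, v ε = ((n • h : G) : WithTop G)) :
    {x : K | (0 : WithTop G) < v (ε * x ^ n)} =
      {x : K | ∃ y : K, y ^ n - y ^ (n - 1) = ε * x ^ n} :=
  stmt1_general v hval hhens n hn ε hnd
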